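/- arXiv:math/0409248 — 4 statements merged into one kernel-verified Lean document; each statement's English description precedes it below -/
import Mathlib

section
/- Let F = FreeGroup α be a free group with a distinguished generator a = of(s) for some s ∈ α, word metric d(x,y) = |x⁻¹y| given by the length of the reduced word, γ_v = {g ∈ F : for all sufficiently large k ∈ ℕ, d(v, a^k) = d(v,g) + d(g, a^k)} for v ∈ F, and γ_v^n = {g ∈ γ_v : d(v,g) ≤ n}. Then for every n ∈ ℕ, the function u_n(x,y) = |γ_x^n ∩ γ_y^n| / (n+1) is a positive definite kernel on F. -/
/-- A function `u : G × G → ℝ` is a positive definite kernel if for every finite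
family `x₁,…,x_k` and reals `λ₁,…,λ_k` one has `∑ i j, λ i * λ j * u (x i, x j) ≥ 0`. -/
def IsPosDefKernel {G : Type*} (u : G × G → ℝ) : Prop :=
  ∀ (k : ℕ) (x : Fin k → G) (lam : Fin k → ℝ),
    0 ≤ ∑ i, ∑ j, lam i * lam j * u (x i, x j)

/-- The word metric on the free group: `d x y = |x⁻¹y|`, the length of the
reduced word of `x⁻¹y`. -/
def wordDist {α : Type*} [DecidableEq α] (x y : FreeGroup α) : ℕ :=
  (x⁻¹ * y).toWord.length

/-- The geodesic ray issuing from `v` and merging with the ray `γ₀ = {a^k : k ≥ 0}`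
where `a = FreeGroup.of s`: the set of `g` lying on a geodesic from `v` to `a^k`
for all sufficiently large `k`. -/
def gammaRay {α : Type*} [DecidableEq α] (s : α) (v : FreeGroup α) : Set (FreeGroup α) :=
  {g | ∀ᶠ k : ℕ in Filter.atTop,
    wordDist v ((FreeGroup.of s) ^ k) =
      wordDist v g + wordDist g ((FreeGroup.of s) ^ k)}

/-- The initial segment `γ_v^n` of length `n` of the geodesic ray `γ_v`. -/
def gammaSeg {α : Type*} [DecidableEq α] (s : α) (v : FreeGroup α) (n : ℕ) :
    Set (FreeGroup α) :=
  {g ∈ gammaRay s v | wordDist v g ≤ n}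

/-- If the triangle inequality is an equality, the reduced word of `v⁻¹g` is a
prefix of the reduced word of `v⁻¹w`. -/
lemma toWord_eq_take {α : Type*} [DecidableEq α] {v g w : FreeGroup α}
    (h : wordDist v w = wordDist v g + wordDist g w) :
    (v⁻¹ * g).toWord = (v⁻¹ * w).toWord.take (wordDist v g) := by
  have hmul : v⁻¹ * w = (v⁻¹ * g) * (g⁻¹ * w) := by group
  have hsub : List.Sublist (v⁻¹ * w).toWord ((v⁻¹ * g).toWord ++ (g⁻¹ * w).toWord) := by
    rw [hmul]; exact FreeGroup.toWord_mul_sublist _ _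
  have hlen : (v⁻¹ * w).toWord.length =
      ((v⁻¹ * g).toWord ++ (g⁻¹ * w).toWord).length := by
    rw [List.length_append]; exact h
  have heq := hsub.eq_of_length hlen
  rw [heq, wordDist, List.take_left]

/-- On a geodesic ray, an element is determined by its distance from `v`. -/
lemma gammaRay_injOn_dist {α : Type*} [DecidableEq α] {s : α} {v g g' : FreeGroup α}
    (hg : g ∈ gammaRay s v) (hg' : g' ∈ gammaRay s v)
    (hd : wordDist v g = wordDist v g') : g = g' := by
  obtain ⟨k, hk⟩ := (hg.and hg').exists
  have h1 := toWord_eq_take hk.1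
  have h2 := toWord_eq_take hk.2
  have : (v⁻¹ * g).toWord = (v⁻¹ * g').toWord := by rw [h1, h2, hd]
  have := FreeGroup.toWord_injective this
  exact mul_left_cancel this

lemma gammaSeg_finite {α : Type*} [DecidableEq α] (s : α) (v : FreeGroup α) (n : ℕ) :
    (gammaSeg s v n).Finite := by
  have : Set.InjOn (wordDist v) (gammaSeg s v n) := fun g hg g' hg' h =>
    gammaRay_injOn_dist hg.1 hg'.1 h
  have himg : Set.MapsTo (wordDist v) (gammaSeg s v n) (Set.Iic n) := fun g hg => hg.2
  exact Set.Finite.of_finite_image ((Set.finite_Iic n).subset (Set.image_subset_iff.2 himg)) this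

/-- For every `n`, the kernel `u_n(x,y) = |γ_x^n ∩ γ_y^n| / (n+1)` is a positive
definite kernel on the free group. -/
theorem freeGroup_overlap_kernel_posDef {α : Type*} [DecidableEq α] (s : α) (n : ℕ) :
    IsPosDefKernel (fun p : FreeGroup α × FreeGroup α =>
      ((gammaSeg s p.1 n ∩ gammaSeg s p.2 n).ncard : ℝ) / (n + 1)) := by
  intro k x lam
  classical
  set A : Fin k → Finset (FreeGroup α) := fun i => (gammaSeg_finite s (x i) n).toFinset with hA
  set S : Finset (FreeGroup α) := Finset.univ.biUnion A with hS
  set f : Fin k → FreeGroup α → ℝ := fun i g => if g ∈ A i then (1:ℝ) else 0 with hf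
  have hcard : ∀ i j, ((gammaSeg s (x i) n ∩ gammaSeg s (x j) n).ncard : ℝ) =
      ∑ g ∈ S, f i g * f j g := by
    intro i j
    have hfin : (gammaSeg s (x i) n ∩ gammaSeg s (x j) n).Finite :=
      (gammaSeg_finite s (x i) n).inter_of_left _
    have h1 : (gammaSeg s (x i) n ∩ gammaSeg s (x j) n).ncard = (A i ∩ A j).card := by
      rw [Set.ncard_eq_toFinset_card _ hfin]
      congr 1
      ext g
      simp [hA, Set.Finite.mem_toFinset]
    have hsub : A i ∩ A j ⊆ S := by
      intro g hg
      simp only [hS, Finset.mem_biUnion, Finset.mem_univ, true_and]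
      exact ⟨i, (Finset.mem_inter.1 hg).1⟩
    have h2 : (A i ∩ A j).card = ∑ g ∈ S, (if g ∈ A i ∩ A j then (1:ℕ) else 0) := by
      rw [Finset.sum_ite_mem, Finset.inter_eq_right.2 hsub, Finset.card_eq_sum_ones]
    rw [h1, h2]
    push_cast
    apply Finset.sum_congr rfl
    intro g _
    by_cases hi : g ∈ A i <;> by_cases hj : g ∈ A j <;> simp [hf, hi, hj]
  have key : ∑ i, ∑ j, lam i * lam j *
      ((gammaSeg s (x i) n ∩ gammaSeg s (x j) n).ncard : ℝ) =
      ∑ g ∈ S, (∑ i, lam i * f i g)^2 := by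
    calc ∑ i, ∑ j, lam i * lam j *
          ((gammaSeg s (x i) n ∩ gammaSeg s (x j) n).ncard : ℝ)
        = ∑ i, ∑ j, ∑ g ∈ S, lam i * lam j * (f i g * f j g) := by
          simp_rw [hcard, Finset.mul_sum]
      _ = ∑ i, ∑ g ∈ S, ∑ j, lam i * lam j * (f i g * f j g) :=
          Finset.sum_congr rfl fun i _ => Finset.sum_comm
      _ = ∑ g ∈ S, ∑ i, ∑ j, lam i * lam j * (f i g * f j g) := Finset.sum_comm
      _ = ∑ g ∈ S, (∑ i, lam i * f i g)^2 := by
          apply Finset.sum_congr rfl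
          intro g _
          rw [sq, Finset.sum_mul_sum]
          apply Finset.sum_congr rfl
          intro i _
          apply Finset.sum_congr rfl
          intro j _
          ring
  have hnn : 0 ≤ ∑ i, ∑ j, lam i * lam j *
      ((gammaSeg s (x i) n ∩ gammaSeg s (x j) n).ncard : ℝ) := by
    rw [key]; exact Finset.sum_nonneg fun g _ => sq_nonneg _
  calc (0:ℝ) ≤ (∑ i, ∑ j, lam i * lam j *
        ((gammaSeg s (x i) n ∩ gammaSeg s (x j) n).ncard : ℝ)) / (n + 1) := by
        apply div_nonneg hnn; positivity
    _ = _ := by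
        rw [Finset.sum_div]
        apply Finset.sum_congr rfl; intro i _
        rw [Finset.sum_div]
        apply Finset.sum_congr rfl; intro j _
        rw [mul_div_assoc]
end

section
/- Let F = FreeGroup α be a free group with a distinguished generator a = of(s), word metric d(x,y) = |x⁻¹y|, γ_v = {g ∈ F : for all sufficiently large k ∈ ℕ, d(v, a^k) = d(v,g) + d(g, a^k)}, γ_v^n = {g ∈ γ_v : d(v,g) ≤ n}, and u_n(x,y) = |γ_x^n ∩ γ_y^n|/(n+1). Then for every finite subset E ⊆ F and every ε > 0 there exists N ∈ ℕ such that |1 − u_N(x,y)| < ε whenever x⁻¹y ∈ E. -/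
namespace List

variable {β : Type*} [DecidableEq β]

def commonPrefixLength : List β → List β → ℕ
  | a :: as, b :: bs => if a = b then commonPrefixLength as bs + 1 else 0
  | _, _ => 0

@[simp]
lemma commonPrefixLength_nil_left (L : List β) : commonPrefixLength [] L = 0 := by
  cases L <;> rfl

@[simp]
lemma commonPrefixLength_nil_right (L : List β) : commonPrefixLength L [] = 0 := by
  cases L <;> rfl

lemma commonPrefixLength_cons_cons (a : β) (as bs : List β) :
    commonPrefixLength (a :: as) (a :: bs) = commonPrefixLength as bs + 1 := by
  simp [commonPrefixLength]

lemma commonPrefixLength_cons_cons_of_ne {a b : β} (h : a ≠ b) (as bs : List β) :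
    commonPrefixLength (a :: as) (b :: bs) = 0 := by
  simp [commonPrefixLength, h]

lemma commonPrefixLength_comm : ∀ A B : List β, commonPrefixLength A B = commonPrefixLength B A
  | [], _ | _ :: _, [] => by simp
  | a :: as, b :: bs => by
    rcases eq_or_ne a b with rfl | h
    · simp [commonPrefixLength_cons_cons, commonPrefixLength_comm as bs]
    · rw [commonPrefixLength_cons_cons_of_ne h, commonPrefixLength_cons_cons_of_ne h.symm]

lemma commonPrefixLength_le_length_left : ∀ A B : List β, commonPrefixLength A B ≤ A.length
  | [], _ | _ :: _, [] => by simp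
  | a :: as, b :: bs => by
    rcases eq_or_ne a b with rfl | h
    · simpa [commonPrefixLength_cons_cons] using commonPrefixLength_le_length_left as bs
    · simp [commonPrefixLength_cons_cons_of_ne h]

lemma commonPrefixLength_le_length_right (A B : List β) : commonPrefixLength A B ≤ B.length :=
  commonPrefixLength_comm A B ▸ commonPrefixLength_le_length_left B A

lemma min_commonPrefixLength_le : ∀ A B C : List β,
    min (commonPrefixLength A B) (commonPrefixLength A C) ≤ commonPrefixLength B C
  | [], _, _ | _ :: _, [], _ | _ :: _, _, [] => by simp
  | a :: as, b :: bs, c :: cs => by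
    rcases eq_or_ne a b with rfl | hab
    · rcases eq_or_ne a c with rfl | hac
      · simpa [commonPrefixLength_cons_cons] using min_commonPrefixLength_le as bs cs
      · simp [commonPrefixLength_cons_cons_of_ne hac]
    · simp [commonPrefixLength_cons_cons_of_ne hab]

lemma commonPrefixLength_take_right :
    ∀ (L : List β) (m : ℕ), commonPrefixLength L (L.take m) = min m L.length
  | [], m => by simp
  | a :: as, 0 => by simp
  | a :: as, m + 1 => by
    simp [commonPrefixLength_cons_cons, commonPrefixLength_take_right as m, Nat.succ_min_succ]

def leadingCount (c : β) : List β → ℕ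
  | [] => 0
  | a :: as => if a = c then leadingCount c as + 1 else 0

lemma leadingCount_le_length (c : β) : ∀ L : List β, leadingCount c L ≤ L.length
  | [] => le_rfl
  | a :: as => by
    unfold leadingCount
    split
    · simpa using leadingCount_le_length c as
    · simp

lemma commonPrefixLength_replicate_right (c : β) :
    ∀ (L : List β) (k : ℕ), commonPrefixLength L (replicate k c) = min (leadingCount c L) k
  | [], k => by simp [leadingCount]
  | a :: as, 0 => by simp
  | a :: as, k + 1 => by
    rcases eq_or_ne a c with rfl | h
    · simp [replicate_succ, commonPrefixLength_cons_cons, leadingCount,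
        commonPrefixLength_replicate_right a as k, Nat.succ_min_succ]
    · simp [replicate_succ, commonPrefixLength_cons_cons_of_ne h, leadingCount, h]

lemma leadingCount_take (c : β) :
    ∀ (L : List β) (m : ℕ), leadingCount c (L.take m) = min m (leadingCount c L)
  | [], m => by simp [leadingCount]
  | a :: as, 0 => by simp [leadingCount]
  | a :: as, m + 1 => by
    rcases eq_or_ne a c with rfl | h
    · simp [leadingCount, leadingCount_take a as m, Nat.succ_min_succ]
    · simp [leadingCount, h]

end List

namespace FreeGroup

open List

variable {α : Type*} [DecidableEq α]

lemma IsReduced.invRev {L : List (α × Bool)} (h : IsReduced L) : IsReduced (invRev L) := by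
  rw [isReduced_iff_reduce_eq, reduce_invRev, h.reduce_eq]

lemma reduce_invRev_append :
    ∀ {U V : List (α × Bool)}, IsReduced U → IsReduced V →
      reduce (invRev U ++ V) =
        invRev (U.drop (commonPrefixLength U V)) ++ V.drop (commonPrefixLength U V)
  | [], V, _, hV => by simp [invRev, hV.reduce_eq]
  | a :: as, [], hU, _ => by simpa using hU.invRev.reduce_eq
  | a :: as, b :: bs, hU, hV => by
    rcases eq_or_ne a b with rfl | hab
    · have step : Red.Step (invRev (a :: as) ++ a :: bs) (invRev as ++ bs) := by
        rw [invRev_cons, List.append_assoc]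
        exact Red.Step.not_rev
      rw [reduce.Step.eq step, commonPrefixLength_cons_cons,
        reduce_invRev_append (hU.infix (suffix_cons a as).isInfix)
          (hV.infix (suffix_cons a bs).isInfix)]
      simp
    · rw [commonPrefixLength_cons_cons_of_ne hab, drop_zero, drop_zero]
      refine IsReduced.reduce_eq (IsChain.append hU.invRev hV ?_)
      rcases a with ⟨u, c⟩
      rcases b with ⟨v, d⟩
      simp only [invRev, map_cons, reverse_cons, getLast?_concat, head?_cons, Option.mem_def,
        Option.some.injEq]
      rintro _ rfl _ rfl rfl
      cases c <;> cases d <;> simp_all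

lemma toWord_inv_mul (u v : FreeGroup α) :
    (u⁻¹ * v).toWord =
      invRev (u.toWord.drop (commonPrefixLength u.toWord v.toWord)) ++
        v.toWord.drop (commonPrefixLength u.toWord v.toWord) := by
  conv_lhs => rw [← mk_toWord (x := u), ← mk_toWord (x := v)]
  rw [inv_mk, mul_mk, toWord_mk]
  exact reduce_invRev_append isReduced_toWord isReduced_toWord

/-- The common prefix length of the reduced words is the Gromov product `(u | v)₁`. -/
lemma norm_inv_mul_add_two_mul_commonPrefixLength (u v : FreeGroup α) :
    (u⁻¹ * v).norm + 2 * commonPrefixLength u.toWord v.toWord = u.norm + v.norm := by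
  have hu := commonPrefixLength_le_length_left u.toWord v.toWord
  have hv := commonPrefixLength_le_length_right u.toWord v.toWord
  rw [norm, toWord_inv_mul, length_append, invRev_length, length_drop, length_drop]
  unfold norm
  omega

end FreeGroup

section WordMetric

open FreeGroup List

variable {α : Type*} [DecidableEq α]

lemma wordDist_eq_norm (x y : FreeGroup α) : wordDist x y = (x⁻¹ * y).norm := rfl

lemma wordDist_mul_left (g x y : FreeGroup α) : wordDist (g * x) (g * y) = wordDist x y := by
  simp only [wordDist_eq_norm, mul_inv_rev, mul_assoc, inv_mul_cancel_left]

lemma wordDist_comm (x y : FreeGroup α) : wordDist x y = wordDist y x := by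
  rw [wordDist_eq_norm, wordDist_eq_norm, ← norm_inv_eq, mul_inv_rev, inv_inv]

lemma wordDist_triangle (x y z : FreeGroup α) : wordDist x z ≤ wordDist x y + wordDist y z := by
  simpa only [wordDist_eq_norm, mul_assoc, mul_inv_cancel_left] using
    norm_mul_le (x⁻¹ * y) (y⁻¹ * z)

lemma eq_of_wordDist_eq_zero {x y : FreeGroup α} (h : wordDist x y = 0) : x = y := by
  rwa [wordDist_eq_norm, FreeGroup.norm_eq_zero, inv_mul_eq_one] at h

/-- The ultrametric inequality for common prefix lengths (Gromov products) in disguise. -/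
lemma norm_add_wordDist_le_max (A B C : FreeGroup α) :
    A.norm + wordDist B C ≤ max (B.norm + wordDist A C) (C.norm + wordDist A B) := by
  have hAB := norm_inv_mul_add_two_mul_commonPrefixLength A B
  have hAC := norm_inv_mul_add_two_mul_commonPrefixLength A C
  have hBC := norm_inv_mul_add_two_mul_commonPrefixLength B C
  have hult := min_commonPrefixLength_le A.toWord B.toWord C.toWord
  have hB := commonPrefixLength_le_length_left A.toWord B.toWord
  have hC := commonPrefixLength_le_length_left A.toWord C.toWord
  rw [wordDist_eq_norm, wordDist_eq_norm, wordDist_eq_norm]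
  omega

lemma wordDist_add_wordDist_le_max (p q r w : FreeGroup α) :
    wordDist p q + wordDist r w ≤
      max (wordDist p r + wordDist q w) (wordDist p w + wordDist q r) := by
  have hnorm (x : FreeGroup α) : (p⁻¹ * x).norm = wordDist p x := rfl
  simpa only [hnorm, wordDist_mul_left] using norm_add_wordDist_le_max (p⁻¹ * q) (p⁻¹ * r) (p⁻¹ * w)

end WordMetric

section GeodesicRay

open FreeGroup List

variable {α : Type*} [DecidableEq α] (s : α)

lemma wordDist_of_pow_add (x : FreeGroup α) {k : ℕ} (hk : leadingCount (s, true) x.toWord ≤ k) :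
    wordDist x (of s ^ k) + 2 * leadingCount (s, true) x.toWord = x.norm + k := by
  simpa [wordDist_eq_norm, toWord_of_pow, commonPrefixLength_replicate_right, hk] using
    norm_inv_mul_add_two_mul_commonPrefixLength x (of s ^ k)

lemma wordDist_of_pow_of_pow {j k : ℕ} (hjk : j ≤ k) :
    wordDist (of s ^ j : FreeGroup α) (of s ^ k) = k - j := by
  rw [wordDist_eq_norm, ← Nat.add_sub_cancel' hjk, pow_add, inv_mul_cancel_left, norm_of_pow,
    Nat.add_sub_cancel_left]

lemma toWord_mk_take (x : FreeGroup α) (m : ℕ) :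
    (mk (x.toWord.take m)).toWord = x.toWord.take m := by
  rw [toWord_mk]
  exact (isReduced_toWord.infix (take_prefix m x.toWord).isInfix).reduce_eq

lemma norm_mk_take (x : FreeGroup α) (m : ℕ) : (mk (x.toWord.take m)).norm = min m x.norm := by
  rw [FreeGroup.norm, toWord_mk_take, length_take, FreeGroup.norm]

lemma wordDist_mk_take (x : FreeGroup α) {m : ℕ} (hm : m ≤ x.norm) :
    wordDist x (mk (x.toWord.take m)) = x.norm - m := by
  have h := norm_inv_mul_add_two_mul_commonPrefixLength x (mk (x.toWord.take m))
  rw [toWord_mk_take, commonPrefixLength_take_right, norm_mk_take] at h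
  rw [wordDist_eq_norm]
  unfold FreeGroup.norm at hm h ⊢
  omega

lemma of_pow_mem_gammaRay (x : FreeGroup α) {j : ℕ} (hj : leadingCount (s, true) x.toWord ≤ j) :
    of s ^ j ∈ gammaRay s x := by
  refine Filter.eventually_atTop.2 ⟨j, fun k hk => ?_⟩
  have hxj := wordDist_of_pow_add s x hj
  have hxk := wordDist_of_pow_add s x (hj.trans hk)
  rw [wordDist_of_pow_of_pow s hk]
  omega

lemma mk_take_mem_gammaRay (x : FreeGroup α) {m : ℕ}
    (htm : leadingCount (s, true) x.toWord ≤ m) (hm : m ≤ x.norm) :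
    mk (x.toWord.take m) ∈ gammaRay s x := by
  set t := leadingCount (s, true) x.toWord
  refine Filter.eventually_atTop.2 ⟨t, fun k hk => ?_⟩
  have hxk := wordDist_of_pow_add s x hk
  have hxg := wordDist_mk_take x hm
  have hgk := wordDist_of_pow_add s (mk (x.toWord.take m)) (k := k)
  rw [toWord_mk_take, leadingCount_take, min_eq_right htm] at hgk
  specialize hgk hk
  rw [norm_mk_take, min_eq_left hm] at hgk
  omega

/-- Before reaching the branch point on `γ₀`, the ray `γ_x` runs back along the reduced word of
`x`; afterwards it follows the powers of `of s`. -/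
lemma exists_mem_gammaRay_wordDist_eq (x : FreeGroup α) (n : ℕ) :
    ∃ g ∈ gammaRay s x, wordDist x g = n := by
  set t := leadingCount (s, true) x.toWord
  have ht : t ≤ x.norm := leadingCount_le_length _ _
  by_cases hn : n + t ≤ x.norm
  · exact ⟨_, mk_take_mem_gammaRay s x (m := x.norm - n) (by omega) (by omega), by
      rw [wordDist_mk_take x (by omega)]; omega⟩
  · refine ⟨_, of_pow_mem_gammaRay s x (j := n + 2 * t - x.norm) (by omega), ?_⟩
    have := wordDist_of_pow_add s x (k := n + 2 * t - x.norm) (by omega)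
    omega

lemma injOn_wordDist_gammaRay (x : FreeGroup α) : Set.InjOn (wordDist x) (gammaRay s x) := by
  intro g hg h hh hgh
  obtain ⟨k, hgk, hhk⟩ := (hg.and hh).exists
  have := wordDist_add_wordDist_le_max g h x (of s ^ k)
  have := wordDist_comm g x
  have := wordDist_comm h x
  exact eq_of_wordDist_eq_zero (by omega)

lemma mem_gammaRay_of_wordDist_lt {x y g : FreeGroup α} (hg : g ∈ gammaRay s x)
    (hxy : wordDist x y < wordDist x g) : g ∈ gammaRay s y := by
  refine hg.mono fun k hk => ?_
  have := wordDist_add_wordDist_le_max y g x (of s ^ k)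
  have := wordDist_triangle y g (of s ^ k)
  have := wordDist_comm y x
  have := wordDist_comm g x
  omega

end GeodesicRay

section Overlap

variable {α : Type*} [DecidableEq α] (s : α)

lemma image_wordDist_gammaSeg (x : FreeGroup α) (n : ℕ) :
    wordDist x '' gammaSeg s x n = Set.Iic n := by
  ext m
  constructor
  · rintro ⟨g, ⟨-, hgn⟩, rfl⟩
    exact hgn
  · intro hm
    obtain ⟨g, hg, rfl⟩ := exists_mem_gammaRay_wordDist_eq s x m
    exact ⟨g, ⟨hg, hm⟩, rfl⟩

lemma ncard_gammaSeg (x : FreeGroup α) (n : ℕ) : (gammaSeg s x n).ncard = n + 1 := by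
  rw [← ((injOn_wordDist_gammaRay s x).mono fun _ hg => hg.1).ncard_image,
    image_wordDist_gammaSeg, ← Finset.coe_Iic, Set.ncard_coe_finset, Nat.card_Iic]

lemma finite_gammaSeg (x : FreeGroup α) (n : ℕ) : (gammaSeg s x n).Finite :=
  Set.finite_of_ncard_ne_zero (by rw [ncard_gammaSeg]; omega)

lemma ncard_gammaSeg_inter_le (x y : FreeGroup α) (n : ℕ) :
    (gammaSeg s x n ∩ gammaSeg s y n).ncard ≤ n + 1 :=
  ncard_gammaSeg s x n ▸ Set.ncard_le_ncard Set.inter_subset_left (finite_gammaSeg s x n)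

/-- The points of `γ_x` at distance `m ∈ (d(x,y), n - d(x,y)]` from `x` lie on `γ_y^n`. -/
lemma sub_two_mul_wordDist_le_ncard_gammaSeg_inter (x y : FreeGroup α) (n : ℕ) :
    n - 2 * wordDist x y ≤ (gammaSeg s x n ∩ gammaSeg s y n).ncard := by
  set d := wordDist x y
  have hsub : (Finset.Ioc d (n - d) : Set ℕ) ⊆ wordDist x '' (gammaSeg s x n ∩ gammaSeg s y n) := by
    intro m hm
    rw [Finset.coe_Ioc, Set.mem_Ioc] at hm
    obtain ⟨g, hg, rfl⟩ := exists_mem_gammaRay_wordDist_eq s x m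
    have hyx := wordDist_triangle y x g
    have := wordDist_comm y x
    exact ⟨g, ⟨⟨hg, by omega⟩, mem_gammaRay_of_wordDist_lt s hg (by omega), by omega⟩, rfl⟩
  calc n - 2 * d = (Finset.Ioc d (n - d)).card := by rw [Nat.card_Ioc]; omega
    _ = (Finset.Ioc d (n - d) : Set ℕ).ncard := (Set.ncard_coe_finset _).symm
    _ ≤ (wordDist x '' (gammaSeg s x n ∩ gammaSeg s y n)).ncard :=
      Set.ncard_le_ncard hsub (((finite_gammaSeg s x n).inter_of_left _).image _)
    _ ≤ (gammaSeg s x n ∩ gammaSeg s y n).ncard :=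
      Set.ncard_image_le ((finite_gammaSeg s x n).inter_of_left _)

lemma abs_one_sub_ncard_gammaSeg_inter_div_le (x y : FreeGroup α) (n : ℕ) :
    |1 - ((gammaSeg s x n ∩ gammaSeg s y n).ncard : ℝ) / (n + 1)| ≤
      (2 * wordDist x y + 1) / (n + 1) := by
  set c := (gammaSeg s x n ∩ gammaSeg s y n).ncard
  have hpos : (0 : ℝ) < n + 1 := by positivity
  have hle : (c : ℝ) ≤ n + 1 := by exact_mod_cast ncard_gammaSeg_inter_le s x y n
  have hge : (n : ℝ) ≤ c + 2 * wordDist x y := by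
    have := sub_two_mul_wordDist_le_ncard_gammaSeg_inter s x y n
    exact_mod_cast (show n ≤ c + 2 * wordDist x y by omega)
  rw [one_sub_div hpos.ne', abs_of_nonneg (div_nonneg (by linarith) hpos.le)]
  exact div_le_div_of_nonneg_right (by linarith) hpos.le

end Overlap

/-- For every finite subset `E` of the free group and every `ε > 0` there exists
`N` such that `|1 − u_N(x,y)| < ε` whenever `x⁻¹y ∈ E`, where
`u_n(x,y) = |γ_x^n ∩ γ_y^n|/(n+1)`. -/
theorem freeGroup_overlap_kernel_close_to_one {α : Type*} [DecidableEq α]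
    (s : α) (E : Finset (FreeGroup α)) (ε : ℝ) (hε : 0 < ε) :
    ∃ N : ℕ, ∀ x y : FreeGroup α, x⁻¹ * y ∈ E →
      |1 - ((gammaSeg s x N ∩ gammaSeg s y N).ncard : ℝ) / (N + 1)| < ε := by
  set D := E.sup FreeGroup.norm
  obtain ⟨N, hN⟩ := exists_nat_gt ((2 * D + 1) / ε)
  refine ⟨N, fun x y hxy => ?_⟩
  have hxyD : wordDist x y ≤ D := Finset.le_sup (f := FreeGroup.norm) hxy
  rw [div_lt_iff₀ hε] at hN
  calc |1 - ((gammaSeg s x N ∩ gammaSeg s y N).ncard : ℝ) / (N + 1)|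
      ≤ (2 * wordDist x y + 1) / (N + 1) := abs_one_sub_ncard_gammaSeg_inter_div_le s x y N
    _ ≤ (2 * D + 1) / (N + 1) := by gcongr
    _ < ε := by rw [div_lt_iff₀ (by positivity)]; nlinarith
end

section
/- Let G be a group admitting a Følner sequence (G_n) of nonempty finite subsets (for every g ∈ G, lim_{n→∞} |gG_n △ G_n| / |G_n| = 0). Then G has Ozawa's Property O: for every finite subset E ⊆ G and every ε > 0, there exist a finite subset F ⊆ G and a function u : G × G → ℝ such that (1) u is a positive definite kernel, (2) u(x,y) ≠ 0 only if x⁻¹y ∈ F, and (3) |1 − u(x,y)| < ε whenever x⁻¹y ∈ E. -/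
open Pointwise Filter

/-- A group admitting a Følner sequence has Ozawa's Property O. -/
theorem amenable_property_O {G : Type*} [Group G] [DecidableEq G]
    (Gseq : ℕ → Finset G) (hne : ∀ n, (Gseq n).Nonempty)
    (hFolner : ∀ g : G,
      Tendsto (fun n => ((symmDiff (g • Gseq n) (Gseq n)).card : ℝ) / (Gseq n).card)
        atTop (nhds 0))
    (E : Finset G) (ε : ℝ) (hε : 0 < ε) :
    ∃ (F : Finset G) (u : G × G → ℝ),
      IsPosDefKernel u ∧
      (∀ x y : G, u (x, y) ≠ 0 → x⁻¹ * y ∈ F) ∧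
      (∀ x y : G, x⁻¹ * y ∈ E → |1 - u (x, y)| < ε) := by
  have hev : ∀ᶠ n in atTop, ∀ g ∈ E,
      ((symmDiff (g • Gseq n) (Gseq n)).card : ℝ) / (Gseq n).card < ε := by
    rw [Filter.eventually_all_finset]
    intro g _
    exact (hFolner g).eventually (eventually_lt_nhds hε)
  obtain ⟨n, hn⟩ := hev.exists
  set A : Finset G := Gseq n with hA
  have hc : (0:ℝ) < A.card := by exact_mod_cast (hne n).card_pos
  refine ⟨A * A⁻¹, fun p => ((p.1 • A ∩ p.2 • A).card : ℝ) / A.card, ?_, ?_, ?_⟩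
  · -- positive definite
    intro k x lam
    classical
    set S : Finset G := Finset.univ.biUnion (fun i : Fin k => x i • A) with hS
    have hsub : ∀ i : Fin k, x i • A ⊆ S := by
      intro i
      rw [hS]
      exact Finset.subset_biUnion_of_mem (fun i => x i • A) (Finset.mem_univ i)
    have key : ∀ i j : Fin k, ((x i • A ∩ x j • A).card : ℝ)
        = ∑ g ∈ S, (if g ∈ x i • A then (1:ℝ) else 0) * (if g ∈ x j • A then 1 else 0) := by
      intro i j
      have h2 : ∀ g : G, (if g ∈ x i • A then (1:ℝ) else 0) * (if g ∈ x j • A then 1 else 0)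
          = if g ∈ x i • A ∩ x j • A then 1 else 0 := by
        intro g
        by_cases h1 : g ∈ x i • A <;> by_cases h2 : g ∈ x j • A <;> simp [h1, h2]
      rw [Finset.sum_congr rfl (fun g _ => h2 g), Finset.sum_boole]
      norm_cast
      rw [Finset.filter_mem_eq_inter,
        Finset.inter_eq_right.mpr (Finset.inter_subset_left.trans (hsub i))]
    have main : ∑ g ∈ S, (∑ i, lam i * (if g ∈ x i • A then (1:ℝ) else 0))^2
        = ∑ i, ∑ j, lam i * lam j * ((x i • A ∩ x j • A).card : ℝ) := by
      have step1 : ∀ g ∈ S, (∑ i, lam i * (if g ∈ x i • A then (1:ℝ) else 0))^2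
          = ∑ i, ∑ j, (lam i * (if g ∈ x i • A then (1:ℝ) else 0)) *
              (lam j * (if g ∈ x j • A then (1:ℝ) else 0)) := by
        intro g _
        rw [sq]
        exact Finset.sum_mul_sum _ _ _ _
      calc ∑ g ∈ S, (∑ i, lam i * (if g ∈ x i • A then (1:ℝ) else 0))^2
          = ∑ g ∈ S, ∑ i, ∑ j, (lam i * (if g ∈ x i • A then (1:ℝ) else 0)) *
              (lam j * (if g ∈ x j • A then (1:ℝ) else 0)) := Finset.sum_congr rfl step1
        _ = ∑ i, ∑ g ∈ S, ∑ j, (lam i * (if g ∈ x i • A then (1:ℝ) else 0)) *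
              (lam j * (if g ∈ x j • A then (1:ℝ) else 0)) := Finset.sum_comm
        _ = ∑ i, ∑ j, ∑ g ∈ S, (lam i * (if g ∈ x i • A then (1:ℝ) else 0)) *
              (lam j * (if g ∈ x j • A then (1:ℝ) else 0)) :=
            Finset.sum_congr rfl fun i _ => Finset.sum_comm
        _ = ∑ i, ∑ j, lam i * lam j * ((x i • A ∩ x j • A).card : ℝ) := by
            refine Finset.sum_congr rfl fun i _ => Finset.sum_congr rfl fun j _ => ?_
            rw [key, Finset.mul_sum]
            exact Finset.sum_congr rfl fun g _ => by ring
    have expand : ∑ i, ∑ j, lam i * lam j * (((x i • A ∩ x j • A).card : ℝ) / A.card)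
        = (∑ g ∈ S, (∑ i, lam i * (if g ∈ x i • A then (1:ℝ) else 0))^2) / A.card := by
      rw [main]
      simp only [Finset.sum_div, mul_div_assoc]
    rw [expand]
    exact div_nonneg (Finset.sum_nonneg fun g _ => sq_nonneg _) hc.le
  · -- support
    intro x y h
    have hmem : (x • A ∩ y • A).Nonempty := by
      by_contra hcon
      rw [Finset.not_nonempty_iff_eq_empty] at hcon
      simp [hcon] at h
    obtain ⟨g, hg⟩ := hmem
    rw [Finset.mem_inter] at hg
    obtain ⟨a, ha, hxa⟩ := Finset.mem_smul_finset.mp hg.1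
    obtain ⟨b, hb, hyb⟩ := Finset.mem_smul_finset.mp hg.2
    have heq : x⁻¹ * y = a * b⁻¹ := by
      have h3 : x * a = y * b := hxa.trans hyb.symm
      rw [← mul_inv_eq_iff_eq_mul.mpr h3.symm]
      group
    rw [heq]
    exact Finset.mul_mem_mul ha (Finset.inv_mem_inv hb)
  · -- estimate
    intro x y hxy
    set g := x⁻¹ * y with hg
    have hcard : (x • A ∩ y • A).card = (A ∩ g • A).card := by
      have h4 : x⁻¹ • (x • A ∩ y • A) = A ∩ g • A := by
        rw [Finset.smul_finset_inter, smul_smul, smul_smul, inv_mul_cancel, one_smul, hg]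
      rw [← h4, Finset.card_smul_finset]
    have hle : (A ∩ g • A).card ≤ A.card := Finset.card_le_card Finset.inter_subset_left
    have hsplit : ((A ∩ g • A).card : ℝ) + ((A \ g • A).card : ℝ) = A.card := by
      exact_mod_cast Finset.card_inter_add_card_sdiff A (g • A)
    have h1 : |1 - ((x • A ∩ y • A).card : ℝ) / A.card|
        = ((A \ g • A).card : ℝ) / A.card := by
      rw [hcard, abs_of_nonneg]
      · field_simp
        linarith
      · rw [sub_nonneg]
        apply div_le_one_of_le₀ _ hc.le
        exact_mod_cast hle
    rw [h1]
    have hsd : (A \ g • A) ⊆ symmDiff (g • A) A := by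
      rw [symmDiff_def, Finset.sup_eq_union]
      exact Finset.subset_union_right
    calc ((A \ g • A).card : ℝ) / A.card
        ≤ ((symmDiff (g • A) A).card : ℝ) / A.card := by
          have hcc : ((A \ g • A).card : ℝ) ≤ ((symmDiff (g • A) A).card : ℝ) := by
            exact_mod_cast Finset.card_le_card hsd
          exact div_le_div_of_nonneg_right hcc hc.le
      _ < ε := hn g hxy
end

section
/- Let G be a group admitting a Følner sequence (G_n) of nonempty finite subsets (for every g ∈ G, lim_{n→∞} |gG_n △ G_n| / |G_n| = 0). Then G satisfies Yu's Property A in the following form: for every finite subset E ⊆ G and every ε > 0 there exist a finite subset F ⊆ G and a map η : G → ℓ²(G) (real-valued square-summable functions on G) such that ‖η_x‖ = 1 for all x, η_x is supported in xF = {x·f : f ∈ F} for all x, and ‖η_x − η_y‖ < ε whenever x⁻¹y ∈ E. -/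
open Pointwise Filter Finset

/-!
Normalize the indicator of a finite set to a unit vector of `ℓ²`. For sets of the same size
`N`, the squared distance between two such vectors is `|S ∆ T| / N`. Taking `η x` to be the
normalized indicator of `x • Gₙ` for a Følner set `Gₙ`, left invariance of counting turns
`‖η x - η y‖²` into `|(x⁻¹y) • Gₙ ∆ Gₙ| / |Gₙ|`, which is small for all `x⁻¹y ∈ E` once `n` is
large.
-/

theorem lp.norm_sq_eq_sum_of_support_subset {ι : Type*} (v : lp (fun _ : ι => ℝ) 2)
    (U : Finset ι) (hv : ∀ i ∉ U, v i = 0) : ‖v‖ ^ 2 = ∑ i ∈ U, v i ^ 2 := by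
  have h := lp.hasSum_norm (p := 2) (by norm_num) v
  simp only [ENNReal.toReal_ofNat, Real.rpow_two, Real.norm_eq_abs, sq_abs] at h
  exact h.unique (hasSum_sum_of_ne_finset_zero fun i hi => by simp [hv i hi])

section NormalizedIndicator

variable {ι : Type*} [DecidableEq ι]

noncomputable def normalizedIndicator (S : Finset ι) : lp (fun _ : ι => ℝ) 2 :=
  ∑ i ∈ S, lp.single 2 i (√(#S : ℝ))⁻¹

theorem normalizedIndicator_apply (S : Finset ι) (i : ι) :
    normalizedIndicator S i = if i ∈ S then (√(#S : ℝ))⁻¹ else 0 := by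
  rw [normalizedIndicator, lp.coeFn_sum, Finset.sum_apply]
  simp [Pi.single_apply]

theorem norm_normalizedIndicator {S : Finset ι} (hS : S.Nonempty) :
    ‖normalizedIndicator S‖ = 1 := by
  have h := lp.norm_sq_eq_sum_of_support_subset (normalizedIndicator S) S
    fun i hi => by rw [normalizedIndicator_apply, if_neg hi]
  rw [sum_congr rfl fun i hi => by rw [normalizedIndicator_apply, if_pos hi], sum_const,
    nsmul_eq_mul, inv_pow, Real.sq_sqrt (by positivity),
    mul_inv_cancel₀ (by simpa using hS.ne_empty)] at h
  exact (pow_eq_one_iff_of_nonneg (norm_nonneg _) two_ne_zero).1 h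

theorem norm_normalizedIndicator_sub_sq {S T : Finset ι} (hST : #S = #T) :
    ‖normalizedIndicator S - normalizedIndicator T‖ ^ 2 = #(symmDiff S T) / #S := by
  have hdiff : ∀ i, (normalizedIndicator S - normalizedIndicator T) i
      = if i ∈ symmDiff S T then (if i ∈ S then (√(#S : ℝ))⁻¹ else -(√(#S : ℝ))⁻¹) else 0 := by
    intro i
    simp only [lp.coeFn_sub, Pi.sub_apply, normalizedIndicator_apply, hST, mem_symmDiff]
    by_cases hS : i ∈ S <;> by_cases hT : i ∈ T <;> simp [hS, hT]
  rw [lp.norm_sq_eq_sum_of_support_subset _ (symmDiff S T) fun i hi => by rw [hdiff, if_neg hi],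
    sum_congr rfl fun i hi => by rw [hdiff, if_pos hi, apply_ite (· ^ 2), neg_sq, ite_self],
    sum_const, nsmul_eq_mul, inv_pow, Real.sq_sqrt (Nat.cast_nonneg _), div_eq_mul_inv]

end NormalizedIndicator

theorem norm_normalizedIndicator_smul_sub_sq {G : Type*} [Group G] [DecidableEq G]
    (A : Finset G) (x y : G) :
    ‖normalizedIndicator (x • A) - normalizedIndicator (y • A)‖ ^ 2
      = #(symmDiff ((x⁻¹ * y) • A) A) / #A := by
  have hy : y • A = x • (x⁻¹ * y) • A := by rw [smul_smul, mul_inv_cancel_left]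
  rw [norm_normalizedIndicator_sub_sq (by simp only [card_smul_finset]), hy,
    ← smul_finset_symmDiff, card_smul_finset, card_smul_finset, symmDiff_comm]

/-- A group admitting a Følner sequence satisfies Yu's Property A: for every
finite `E ⊆ G` and `ε > 0` there exist a finite `F ⊆ G` and unit vectors
`η x ∈ ℓ²(G)` supported in `xF`, with `‖η x − η y‖ < ε` whenever `x⁻¹y ∈ E`. -/
theorem amenable_property_A {G : Type*} [Group G] [DecidableEq G]
    (Gseq : ℕ → Finset G) (hne : ∀ n, (Gseq n).Nonempty)
    (hFolner : ∀ g : G,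
      Tendsto (fun n => ((symmDiff (g • Gseq n) (Gseq n)).card : ℝ) / (Gseq n).card)
        atTop (nhds 0))
    (E : Finset G) (ε : ℝ) (hε : 0 < ε) :
    ∃ (F : Finset G) (η : G → lp (fun _ : G => ℝ) 2),
      (∀ x : G, ‖η x‖ = 1) ∧
      (∀ x g : G, η x g ≠ 0 → g ∈ x • F) ∧
      (∀ x y : G, x⁻¹ * y ∈ E → ‖η x - η y‖ < ε) := by
  obtain ⟨n, hn⟩ : ∃ n, ∀ a ∈ E, (#(symmDiff (a • Gseq n) (Gseq n)) : ℝ) / #(Gseq n) < ε ^ 2 :=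
    ((eventually_all_finset E).2 fun a _ =>
      (hFolner a).eventually_lt_const (by positivity)).exists
  refine ⟨Gseq n, fun x => normalizedIndicator (x • Gseq n),
    fun x => norm_normalizedIndicator ((hne n).smul_finset), fun x g hg => ?_, fun x y hxy => ?_⟩
  · by_contra hg'
    exact hg (by rw [normalizedIndicator_apply, if_neg hg'])
  · refine lt_of_pow_lt_pow_left₀ 2 hε.le ?_
    rw [norm_normalizedIndicator_smul_sub_sq]
    exact hn _ hxy
end
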